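/- arXiv:2202.04511 — 4 statements merged into one kernel-verified Lean document; each statement's English description precedes it below -/
import Mathlib

section
/- Let X × Y and X be locally compact separable metric spaces, let proj_X : X × Y → X be the projection onto the first component, let γ be a finite Borel measure on X × Y with μ = (proj_X)_*γ, let ν be a finite Borel measure on X, and let x ↦ η_x be a measurable family of finite Borel measures on X × Y such that γ(A) = ∫_X η_x(A) dν(x) for every Borel A ⊆ X × Y and η_x is concentrated on {x} × Y for ν-almost every x. Set C = { x ∈ X : η_x(X × Y) > 0 }. Then the restriction ν|_C is absolutely continuous with respect to μ, and writing h for the Radon–Nikodym density of ν|_C with respect to μ, one has h(x) · η_x = γ_x for μ-almost every x ∈ X, where (γ_x)_{x ∈ X} is a disintegration of γ with respect to μ into conditional probability measures concentrated on the fibres {x} × Y. -/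
/-!
Disintegrating `γ` along the fibres over `ν` gives `μ = (proj_X)_*γ = g • ν` with
`g x = η_x(X × Y)`, so `ν|_{g > 0} ≪ μ`. With `h = d(ν|_C)/dμ`, the family `h • η` again
disintegrates `γ`, now over `μ`. Fibre disintegrations over a σ-finite measure are a.e. unique on
a countably generated space, since both integrate to `γ(A ∩ proj_X⁻¹ B)` over every `B`.
-/

open MeasureTheory Set MeasurableSpace

theorem countable_generatePiSystem {α : Type*} {S : Set (Set α)} (hS : S.Countable) :
    (generatePiSystem S).Countable := by
  refine ((countable_ofPred_finite_subset hS).image fun T => ⋂₀ T).mono fun t ht => ?_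
  induction ht with
  | base hs => exact ⟨{_}, ⟨finite_singleton _, singleton_subset_iff.2 hs⟩, sInter_singleton _⟩
  | inter _ _ _ ihs iht =>
    obtain ⟨T₁, ⟨hT₁, hT₁S⟩, rfl⟩ := ihs
    obtain ⟨T₂, ⟨hT₂, hT₂S⟩, rfl⟩ := iht
    exact ⟨T₁ ∪ T₂, ⟨hT₁.union hT₂, union_subset hT₁S hT₂S⟩, sInter_union _ _⟩

theorem MeasurableSpace.exists_countable_isPiSystem_generateFrom (α : Type*)
    [m : MeasurableSpace α] [CountablyGenerated α] :
    ∃ S : Set (Set α), S.Countable ∧ IsPiSystem S ∧ m = generateFrom S :=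
  ⟨_, countable_generatePiSystem countable_countableGeneratingSet, isPiSystem_generatePiSystem _,
    (generateFrom_generatePiSystem_eq.trans generateFrom_countableGeneratingSet).symm⟩

/-- A countable generating π-system lets the exceptional null sets be collected into one. -/
theorem ae_eq_of_forall_ae_apply_eq {α β : Type*} [MeasurableSpace α] [MeasurableSpace β]
    [CountablyGenerated β] {m : Measure α} {κ₁ κ₂ : α → Measure β}
    (hfin : ∀ᵐ x ∂m, IsFiniteMeasure (κ₂ x))
    (h : ∀ A, MeasurableSet A → ∀ᵐ x ∂m, κ₁ x A = κ₂ x A) :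
    ∀ᵐ x ∂m, κ₁ x = κ₂ x := by
  obtain ⟨S, hSc, hSpi, hgen⟩ := exists_countable_isPiSystem_generateFrom β
  have hS : ∀ᵐ x ∂m, ∀ A ∈ S, κ₁ x A = κ₂ x A := (ae_ball_iff hSc).2 fun A hA =>
    h A (hgen ▸ measurableSet_generateFrom hA)
  filter_upwards [hfin, hS, h univ MeasurableSet.univ] with x _ hxS hx_univ
  exact (ext_of_generate_finite S hgen hSpi (fun A hA => (hxS A hA).symm) hx_univ.symm).symm

theorem measure_inter_fst_preimage_of_compl_fiber_null {X Y : Type*} [MeasurableSpace X]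
    [MeasurableSpace Y] {ρ : Measure (X × Y)} {x : X} (hρ : ρ ({x} ×ˢ univ)ᶜ = 0)
    (A : Set (X × Y)) (B : Set X) :
    ρ (A ∩ Prod.fst ⁻¹' B) = B.indicator (fun _ => ρ A) x := by
  by_cases hx : x ∈ B
  · rw [indicator_of_mem hx]
    refine measure_inter_conull (measure_mono_null (compl_subset_compl.2 ?_) hρ)
    rintro ⟨x', y⟩ ⟨rfl, -⟩
    exact hx
  · rw [indicator_of_notMem hx]
    refine measure_mono_null ?_ hρ
    rintro ⟨x', y⟩ ⟨-, hx'⟩ ⟨rfl, -⟩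
    exact hx hx'

structure IsFiberDisintegration {X Y : Type*} [MeasurableSpace X] [MeasurableSpace Y]
    (γ : Measure (X × Y)) (m : Measure X) (κ : X → Measure (X × Y)) : Prop where
  measurable : Measurable κ
  measure_eq_lintegral : ∀ A, MeasurableSet A → γ A = ∫⁻ x, κ x A ∂m
  ae_compl_fiber_null : ∀ᵐ x ∂m, κ x (({x} ×ˢ (univ : Set Y))ᶜ) = 0

namespace IsFiberDisintegration

variable {X Y : Type*} [MeasurableSpace X] [MeasurableSpace Y]
  {γ : Measure (X × Y)} {m : Measure X} {κ : X → Measure (X × Y)}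

theorem measurable_apply (hκ : IsFiberDisintegration γ m κ) {A : Set (X × Y)}
    (hA : MeasurableSet A) : Measurable fun x => κ x A :=
  (Measure.measurable_coe hA).comp hκ.measurable

theorem measure_inter_fst_preimage (hκ : IsFiberDisintegration γ m κ) {A : Set (X × Y)}
    {B : Set X} (hA : MeasurableSet A) (hB : MeasurableSet B) :
    γ (A ∩ Prod.fst ⁻¹' B) = ∫⁻ x in B, κ x A ∂m := by
  rw [hκ.measure_eq_lintegral _ (hA.inter (measurable_fst hB)), ← lintegral_indicator hB]
  exact lintegral_congr_ae <| hκ.ae_compl_fiber_null.mono fun x hx =>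
    measure_inter_fst_preimage_of_compl_fiber_null hx A B

theorem map_fst_eq_withDensity (hκ : IsFiberDisintegration γ m κ) :
    γ.map Prod.fst = m.withDensity fun x => κ x univ := by
  ext B hB
  rw [Measure.map_apply measurable_fst hB, withDensity_apply _ hB, ← univ_inter (_ ⁻¹' B),
    hκ.measure_inter_fst_preimage MeasurableSet.univ hB]

theorem map_fst_absolutelyContinuous (hκ : IsFiberDisintegration γ m κ) :
    γ.map Prod.fst ≪ m :=
  hκ.map_fst_eq_withDensity ▸ withDensity_absolutelyContinuous _ _

theorem restrict_absolutelyContinuous_map_fst (hκ : IsFiberDisintegration γ m κ) :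
    m.restrict {x | 0 < κ x univ} ≪ γ.map Prod.fst := by
  have hmeas := hκ.measurable_apply MeasurableSet.univ
  have hC : MeasurableSet {x | 0 < κ x univ} := measurableSet_lt measurable_const hmeas
  rw [hκ.map_fst_eq_withDensity]
  refine (withDensity_absolutelyContinuous' hmeas.aemeasurable ?_).trans ?_
  · exact (ae_restrict_mem hC).mono fun _ hx => hx.ne'
  · rw [← restrict_withDensity hC]
    exact Measure.absolutelyContinuous_of_le Measure.restrict_le_self

/-- The density `h` of `m|_C` with respect to `μ = γ.map Prod.fst` satisfies `h • μ = m|_C`,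
and `κ x` vanishes off `C`. -/
theorem smul_rnDeriv [IsFiniteMeasure γ] [SigmaFinite m] (hκ : IsFiberDisintegration γ m κ) :
    IsFiberDisintegration γ (γ.map Prod.fst)
      fun x => (m.restrict {x | 0 < κ x univ}).rnDeriv (γ.map Prod.fst) x • κ x where
  measurable := Measure.measurable_of_measurable_coe _ fun A hA =>
    (Measure.measurable_rnDeriv _ _).mul (hκ.measurable_apply hA)
  measure_eq_lintegral A hA := by
    have hsupp : (fun x => κ x A).support ⊆ {x | 0 < κ x univ} := fun x hx =>
      pos_iff_ne_zero.2 fun h0 => hx (measure_mono_null (subset_univ A) h0)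
    simp only [Measure.smul_apply, smul_eq_mul]
    calc γ A = ∫⁻ x in {x | 0 < κ x univ}, κ x A ∂m := by
          rw [hκ.measure_eq_lintegral A hA, setLIntegral_eq_of_support_subset hsupp]
      _ = ∫⁻ x, κ x A ∂(γ.map Prod.fst).withDensity
            ((m.restrict {x | 0 < κ x univ}).rnDeriv (γ.map Prod.fst)) := by
          rw [Measure.withDensity_rnDeriv_eq _ _ hκ.restrict_absolutelyContinuous_map_fst]
      _ = _ := lintegral_withDensity_eq_lintegral_mul _ (Measure.measurable_rnDeriv _ _)
          (hκ.measurable_apply hA)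
  ae_compl_fiber_null := hκ.map_fst_absolutelyContinuous.ae_le <|
    hκ.ae_compl_fiber_null.mono fun x hx => by
      rw [Measure.smul_apply, hx, smul_zero]

theorem ae_apply_eq [SigmaFinite m] {κ' : X → Measure (X × Y)}
    (hκ : IsFiberDisintegration γ m κ) (hκ' : IsFiberDisintegration γ m κ')
    {A : Set (X × Y)} (hA : MeasurableSet A) : ∀ᵐ x ∂m, κ x A = κ' x A :=
  ae_eq_of_forall_setLIntegral_eq_of_sigmaFinite (hκ.measurable_apply hA)
    (hκ'.measurable_apply hA) fun B hB _ => by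
      rw [← hκ.measure_inter_fst_preimage hA hB, hκ'.measure_inter_fst_preimage hA hB]

theorem ae_eq [CountablyGenerated (X × Y)] [SigmaFinite m] {κ' : X → Measure (X × Y)}
    (hκ : IsFiberDisintegration γ m κ) (hκ' : IsFiberDisintegration γ m κ')
    (hfin : ∀ᵐ x ∂m, IsFiniteMeasure (κ' x)) : ∀ᵐ x ∂m, κ x = κ' x :=
  ae_eq_of_forall_ae_apply_eq hfin fun _ hA => hκ.ae_apply_eq hκ' hA

end IsFiberDisintegration

theorem disintegration_absolutely_continuous_general
    {X Y : Type*}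
    [MetricSpace X] [TopologicalSpace.SeparableSpace X]
    [MeasurableSpace X] [BorelSpace X]
    [MetricSpace Y] [TopologicalSpace.SeparableSpace Y]
    [MeasurableSpace Y] [BorelSpace Y]
    (γ : Measure (X × Y)) [IsFiniteMeasure γ]
    (ν : Measure X) [IsFiniteMeasure ν]
    (η : X → Measure (X × Y))
    (hηmeas : Measurable η)
    (hηdis : ∀ A : Set (X × Y), MeasurableSet A → γ A = ∫⁻ x, η x A ∂ν)
    (hηconc : ∀ᵐ x ∂ν, η x (({x} ×ˢ (Set.univ : Set Y))ᶜ) = 0) :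
    (ν.restrict {x : X | 0 < η x Set.univ} ≪ γ.map Prod.fst) ∧
    ∀ γx : X → Measure (X × Y),
      Measurable γx →
      (∀ᵐ x ∂(γ.map Prod.fst), IsProbabilityMeasure (γx x)) →
      (∀ A : Set (X × Y), MeasurableSet A → γ A = ∫⁻ x, γx x A ∂(γ.map Prod.fst)) →
      (∀ᵐ x ∂(γ.map Prod.fst), γx x (({x} ×ˢ (Set.univ : Set Y))ᶜ) = 0) →
      ∀ᵐ x ∂(γ.map Prod.fst),
        ((ν.restrict {x : X | 0 < η x Set.univ}).rnDeriv (γ.map Prod.fst) x) • η x = γx x := by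
  have hη : IsFiberDisintegration γ ν η := ⟨hηmeas, hηdis, hηconc⟩
  refine ⟨hη.restrict_absolutelyContinuous_map_fst, fun γx hγmeas hγprob hγdis hγconc => ?_⟩
  have hγ : IsFiberDisintegration γ (γ.map Prod.fst) γx := ⟨hγmeas, hγdis, hγconc⟩
  exact hη.smul_rnDeriv.ae_eq hγ (hγprob.mono fun _ _ => inferInstance)

/-- If `x ↦ η_x` disintegrates `γ` with respect to a measure `ν`, and
`C = {x : η_x(X × Y) > 0}`, then `ν|_C ≪ μ` where `μ = (proj_X)_*γ`, and the
Radon–Nikodym density `h` of `ν|_C` w.r.t. `μ` satisfies `h(x) • η_x = γ_x` for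
`μ`-a.e. `x`, where `(γ_x)` is any disintegration of `γ` with respect to `μ` into
conditional probability measures concentrated on the fibres `{x} × Y`. -/
theorem disintegration_absolutely_continuous
    {X Y : Type*}
    [MetricSpace X] [LocallyCompactSpace X] [TopologicalSpace.SeparableSpace X]
    [MeasurableSpace X] [BorelSpace X]
    [MetricSpace Y] [LocallyCompactSpace Y] [TopologicalSpace.SeparableSpace Y]
    [MeasurableSpace Y] [BorelSpace Y]
    (γ : Measure (X × Y)) [IsFiniteMeasure γ]
    (ν : Measure X) [IsFiniteMeasure ν]
    (η : X → Measure (X × Y))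
    (hηfin : ∀ x, IsFiniteMeasure (η x))
    (hηmeas : Measurable η)
    (hηdis : ∀ A : Set (X × Y), MeasurableSet A → γ A = ∫⁻ x, η x A ∂ν)
    (hηconc : ∀ᵐ x ∂ν, η x (({x} ×ˢ (Set.univ : Set Y))ᶜ) = 0) :
    (ν.restrict {x : X | 0 < η x Set.univ} ≪ γ.map Prod.fst) ∧
    ∀ γx : X → Measure (X × Y),
      Measurable γx →
      (∀ᵐ x ∂(γ.map Prod.fst), IsProbabilityMeasure (γx x)) →
      (∀ A : Set (X × Y), MeasurableSet A → γ A = ∫⁻ x, γx x A ∂(γ.map Prod.fst)) →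
      (∀ᵐ x ∂(γ.map Prod.fst), γx x (({x} ×ˢ (Set.univ : Set Y))ᶜ) = 0) →
      ∀ᵐ x ∂(γ.map Prod.fst),
        ((ν.restrict {x : X | 0 < η x Set.univ}).rnDeriv (γ.map Prod.fst) x) • η x = γx x :=
  disintegration_absolutely_continuous_general γ ν η hηmeas hηdis hηconc
end

section
/- Let X be a measurable space, let Y be a complete separable metric space with its Borel σ-algebra, let μ be a non-atomic probability measure on X, let T : X → Y be a measurable map, and let g : X → ProbabilityMeasure(Y) be a measurable map (with respect to the σ-algebra generated by the evaluation maps ρ ↦ ρ(A) for Borel A ⊆ Y). Suppose that (x ↦ δ_{T(x)})_*μ = g_*μ as measures on the space of Borel probability measures on Y. Then there exists a measurable map S : X → Y such that g(x) = δ_{S(x)} for μ-almost every x ∈ X. -/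
/-!
A Polish space carries a countable family `A n` of Borel sets separating points. A probability
measure taking only the values `0` and `1` on every `A n` is a Dirac mass, and these measures form
a measurable set `D` of measures containing all Dirac masses. Since `g_*μ = (δ ∘ T)_*μ` is
carried by `D`, almost every `g x` is a Dirac mass `δ_{S x}`; after replacing `g` by `δ ∘ T` off
`g⁻¹ D`, the point `S x` is recovered measurably as `S⁻¹ s = {x | g x s = 1}`.
-/

open MeasureTheory

namespace MeasureTheory

theorem ae_mem_of_map_eq {X β : Type*} [MeasurableSpace X] [MeasurableSpace β] {μ : Measure X}
    {F G : X → β} (hF : AEMeasurable F μ) (hG : AEMeasurable G μ) (h : μ.map F = μ.map G)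
    {D : Set β} (hD : MeasurableSet D) (hFD : ∀ᵐ x ∂μ, F x ∈ D) :
    ∀ᵐ x ∂μ, G x ∈ D :=
  (ae_map_iff hG hD).1 (h ▸ (ae_map_iff hF hD).2 hFD)

namespace Measure

variable {α : Type*} [MeasurableSpace α]

def zeroOneOn (A : ℕ → Set α) : Set (Measure α) :=
  {ρ | ∀ n, ρ (A n) = 0 ∨ ρ (A n) = 1}

theorem measurableSet_zeroOneOn {A : ℕ → Set α} (hA : ∀ n, MeasurableSet (A n)) :
    MeasurableSet (zeroOneOn A) := by
  have : zeroOneOn A = ⋂ n, (fun ρ : Measure α ↦ ρ (A n)) ⁻¹' {0, 1} := by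
    ext ρ; simp [zeroOneOn]
  rw [this]
  exact .iInter fun n ↦ measurable_coe (hA n) (.insert (measurableSet_singleton 1) 0)

theorem dirac_mem_zeroOneOn {A : ℕ → Set α} (hA : ∀ n, MeasurableSet (A n)) (y : α) :
    dirac y ∈ zeroOneOn A := fun n ↦ by
  by_cases hy : y ∈ A n <;> simp [dirac_apply' _ (hA n), hy]

theorem exists_eq_dirac_of_mem_zeroOneOn {A : ℕ → Set α} (hA : ∀ n, MeasurableSet (A n))
    (hsep : ∀ x y, (∀ n, x ∈ A n ↔ y ∈ A n) → x = y)
    {ρ : Measure α} [IsProbabilityMeasure ρ] (hρ : ρ ∈ zeroOneOn A) :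
    ∃ x, ρ = dirac x := by
  have hmem : ∀ᵐ y ∂ρ, ∀ n, y ∈ A n ↔ ρ (A n) = 1 := by
    refine ae_all_iff.2 fun n ↦ ?_
    rcases hρ n with h | h
    · filter_upwards [measure_eq_zero_iff_ae_notMem.1 h] with y hy
      simp [hy, h]
    · filter_upwards [(prob_compl_eq_zero_iff (hA n)).2 h] with y hy
      simp [hy, h]
  obtain ⟨x, hx⟩ := hmem.exists
  have hx_ae : id =ᵐ[ρ] fun _ ↦ x := hmem.mono fun y hy ↦
    hsep y x fun n ↦ (hy n).trans (hx n).symm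
  exact ⟨x, by simpa using (ProbabilityTheory.hasLaw_dirac_of_ae_eq hx_ae).map_eq⟩

theorem measurable_of_forall_eq_dirac {X Y : Type*} [MeasurableSpace X] [MeasurableSpace Y]
    {κ : X → Measure Y} (hκ : Measurable κ) {f : X → Y} (hf : ∀ x, κ x = dirac (f x)) :
    Measurable f := by
  intro s hs
  have : f ⁻¹' s = (fun x ↦ κ x s) ⁻¹' {1} := by
    ext x; simp [hf, dirac_apply' _ hs, Set.indicator_eq_one_iff_mem]
  rw [this]
  exact measurable_coe hs |>.comp hκ (measurableSet_singleton 1)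

end Measure

end MeasureTheory

open Measure in
theorem exists_transport_map_of_dirac_class_general
    {X Y : Type*} [MeasurableSpace X]
    [MetricSpace Y] [CompleteSpace Y] [TopologicalSpace.SeparableSpace Y]
    [MeasurableSpace Y] [BorelSpace Y]
    (μ : Measure X)
    (T : X → Y) (hT : Measurable T)
    (g : X → ProbabilityMeasure Y)
    (hg : Measurable fun x => (g x : Measure Y))
    (h : μ.map (fun x => (Measure.dirac (T x) : Measure Y)) =
         μ.map (fun x => (g x : Measure Y))) :
    ∃ S : X → Y, Measurable S ∧ ∀ᵐ x ∂μ, (g x : Measure Y) = Measure.dirac (S x) := by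
  classical
  obtain ⟨A, hA, hsep⟩ := exists_seq_separating Y MeasurableSet.univ Set.univ
  have hD : MeasurableSet (zeroOneOn A) := measurableSet_zeroOneOn hA
  have hg_mem : ∀ᵐ x ∂μ, (g x : Measure Y) ∈ zeroOneOn A :=
    ae_mem_of_map_eq (measurable_dirac.comp hT).aemeasurable hg.aemeasurable h hD
      (ae_of_all _ fun x ↦ dirac_mem_zeroOneOn hA (T x))
  let g' : X → Measure Y := fun x ↦ if (g x : Measure Y) ∈ zeroOneOn A then g x else dirac (T x)
  have hg' : Measurable g' := Measurable.ite (hD.preimage hg) hg (measurable_dirac.comp hT)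
  have hg'_dirac : ∀ x, ∃ y, g' x = dirac y := by
    intro x
    by_cases hx : (g x : Measure Y) ∈ zeroOneOn A
    · simpa [g', hx] using exists_eq_dirac_of_mem_zeroOneOn hA
        (fun y z hyz ↦ hsep y trivial z trivial hyz) hx
    · exact ⟨T x, if_neg hx⟩
  choose S hS using hg'_dirac
  refine ⟨S, measurable_of_forall_eq_dirac hg' hS, ?_⟩
  filter_upwards [hg_mem] with x hx
  rw [← hS x]
  exact (if_pos hx).symm

/-- If `μ` is a non-atomic probability measure, `T : X → Y` is a measurable map into a
complete separable metric space and `g : X → 𝒫(Y)` is a Giry-measurable map whose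
pushforward under `μ` agrees with that of `x ↦ δ_{T(x)}`, then there is a measurable
`S : X → Y` with `g(x) = δ_{S(x)}` for `μ`-a.e. `x`. -/
theorem exists_transport_map_of_dirac_class
    {X Y : Type*} [MeasurableSpace X]
    [MetricSpace Y] [CompleteSpace Y] [TopologicalSpace.SeparableSpace Y]
    [MeasurableSpace Y] [BorelSpace Y]
    (μ : Measure X) [IsProbabilityMeasure μ]
    (hatom : ∀ x : X, μ {x} = 0)
    (T : X → Y) (hT : Measurable T)
    (g : X → ProbabilityMeasure Y)
    (hg : Measurable fun x => (g x : Measure Y))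
    (h : μ.map (fun x => (Measure.dirac (T x) : Measure Y)) =
         μ.map (fun x => (g x : Measure Y))) :
    ∃ S : X → Y, Measurable S ∧ ∀ᵐ x ∂μ, (g x : Measure Y) = Measure.dirac (S x) :=
  exists_transport_map_of_dirac_class_general μ T hT g hg h
end

section
/- Let X and Y be locally compact, complete, separable metric spaces, let π : X → Y be a Borel map, let μ be a finite Borel measure on X, set ν = π_*μ, and let (μ_y)_{y∈Y} be a disintegration of μ over π. Then the disintegration map y ↦ μ_y satisfies the following Lusin-type property: for every Borel set A ⊆ Y with ν(A) < ∞ and every ε > 0, there exists a closed set K ⊆ A with ν(A \ K) < ε such that the restriction of y ↦ μ_y to K is continuous as a map into ProbabilityMeasure(X) with the topology of weak convergence. -/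
open MeasureTheory Filter Set TopologicalSpace
open scoped ENNReal Topology

/-!
Lusin's theorem holds for measurable maps into any second-countable space: for each basic open
`U`, approximate `f⁻¹ U ∩ A` and `A \ f⁻¹ U` from inside by closed sets; on the intersection `K`
of all these pairs, `f⁻¹ U ∩ K` is relatively open.

The map `y ↦ μ_y` is not known to be measurable for the Borel structure of the weak topology, so
Lusin's theorem is applied instead to the countably many measurable functions `y ↦ μ_y V`, with
`V` ranging over finite unions of basic open sets of `X`. Continuity of all of them on `K` gives
weak continuity by the portmanteau criterion `μ G ≤ liminf μₙ G`, since every open `G` is a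
countable directed union of such `V`.
-/

section FiniteUnionsOfCountableBasis

variable (Ω : Type*) [TopologicalSpace Ω] [SecondCountableTopology Ω]

def finiteUnionsOfCountableBasis : Set (Set Ω) :=
  sUnion '' {u | u.Finite ∧ u ⊆ countableBasis Ω}

variable {Ω}

theorem countable_finiteUnionsOfCountableBasis : (finiteUnionsOfCountableBasis Ω).Countable :=
  (countable_ofPred_finite_subset (countable_countableBasis Ω)).image _

theorem isOpen_of_mem_finiteUnionsOfCountableBasis {V : Set Ω}
    (hV : V ∈ finiteUnionsOfCountableBasis Ω) : IsOpen V := by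
  obtain ⟨u, ⟨-, hu⟩, rfl⟩ := hV
  exact isOpen_sUnion fun b hb ↦ isOpen_of_mem_countableBasis (hu hb)

theorem IsOpen.measure_eq_iSup_finiteUnionsOfCountableBasis [MeasurableSpace Ω]
    {G : Set Ω} (hG : IsOpen G) (μ : Measure Ω) :
    μ G = ⨆ V ∈ finiteUnionsOfCountableBasis Ω, ⨆ (_ : V ⊆ G), μ V := by
  refine le_antisymm ?_ (iSup₂_le fun V _ ↦ iSup_le fun hVG ↦ measure_mono hVG)
  set S := {b ∈ countableBasis Ω | b ⊆ G}
  have hS : S.Countable := (countable_countableBasis Ω).mono fun _ hb ↦ hb.1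
  have hGS : G = ⋃ u ∈ {u | u.Finite ∧ u ⊆ S}, ⋃₀ u := by
    refine subset_antisymm (fun x hx ↦ ?_)
      (iUnion₂_subset fun u hu ↦ sUnion_subset fun b hb ↦ (hu.2 hb).2)
    obtain ⟨b, hb, hxb, hbG⟩ := (isBasis_countableBasis Ω).exists_subset_of_mem_open hx hG
    have hbS : {b} ∈ {u | u.Finite ∧ u ⊆ S} :=
      ⟨finite_singleton b, singleton_subset_iff.2 ⟨hb, hbG⟩⟩
    exact mem_biUnion hbS (mem_sUnion_of_mem hxb rfl)
  calc μ G = μ (⋃ u ∈ {u | u.Finite ∧ u ⊆ S}, ⋃₀ u) := congrArg μ hGS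
    _ = ⨆ u ∈ {u | u.Finite ∧ u ⊆ S}, μ (⋃₀ u) := by
      refine measure_biUnion_eq_iSup (countable_ofPred_finite_subset hS) ?_
      rintro u ⟨hu, huS⟩ v ⟨hv, hvS⟩
      exact ⟨u ∪ v, ⟨hu.union hv, union_subset huS hvS⟩, sUnion_mono subset_union_left,
        sUnion_mono subset_union_right⟩
    _ ≤ _ := iSup₂_le fun u ⟨hu, huS⟩ ↦ le_iSup₂_of_le (⋃₀ u)
      ⟨u, ⟨hu, huS.trans fun _ hb ↦ hb.1⟩, rfl⟩
      (le_iSup (fun _ ↦ μ (⋃₀ u)) (sUnion_subset fun _ hb ↦ (huS hb).2))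

end FiniteUnionsOfCountableBasis

section Lusin

variable {α β : Type*} [TopologicalSpace α] [MeasurableSpace α] [OpensMeasurableSpace α]
  {μ : Measure α} [μ.WeaklyRegular] {A : Set α} {ε : ℝ≥0∞}

theorem MeasurableSet.exists_isClosed_subset_inter_and_sdiff (hA : MeasurableSet A)
    (hμA : μ A ≠ ∞) {S : Set α} (hS : MeasurableSet S) (hε : ε ≠ 0) :
    ∃ F F', F ⊆ A ∩ S ∧ F' ⊆ A \ S ∧ IsClosed F ∧ IsClosed F' ∧ μ (A \ (F ∪ F')) < ε := by
  have hε2 : ε / 2 ≠ 0 := (ENNReal.half_pos hε).ne'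
  obtain ⟨F, hFA, hF, hμF⟩ := (hA.inter hS).exists_isClosed_sdiff_lt
    (measure_ne_top_of_subset inter_subset_left hμA) hε2
  obtain ⟨F', hF'A, hF', hμF'⟩ := (hA.diff hS).exists_isClosed_sdiff_lt
    (measure_ne_top_of_subset sdiff_subset hμA) hε2
  refine ⟨F, F', hFA, hF'A, hF, hF', ?_⟩
  calc μ (A \ (F ∪ F')) ≤ μ ((A ∩ S) \ F ∪ (A \ S) \ F') := by
        refine measure_mono fun x ⟨hxA, hxF⟩ ↦ ?_
        by_cases hxS : x ∈ S
        exacts [Or.inl ⟨⟨hxA, hxS⟩, fun h ↦ hxF (Or.inl h)⟩,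
          Or.inr ⟨⟨hxA, hxS⟩, fun h ↦ hxF (Or.inr h)⟩]
    _ ≤ μ ((A ∩ S) \ F) + μ ((A \ S) \ F') := measure_union_le _ _
    _ < ε / 2 + ε / 2 := ENNReal.add_lt_add hμF hμF'
    _ = ε := ENNReal.add_halves ε

theorem Measurable.exists_isClosed_continuousOn [TopologicalSpace β] [SecondCountableTopology β]
    [MeasurableSpace β] [OpensMeasurableSpace β] {f : α → β} (hf : Measurable f)
    (hA : MeasurableSet A) (hμA : μ A ≠ ∞) (hε : ε ≠ 0) :
    ∃ K ⊆ A, IsClosed K ∧ μ (A \ K) < ε ∧ ContinuousOn f K := by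
  set B := countableBasis β
  have : Countable B := (countable_countableBasis β).to_subtype
  have hε2 : ε / 2 ≠ 0 := (ENNReal.half_pos hε).ne'
  obtain ⟨w, hw, hwε⟩ := ENNReal.exists_pos_sum_of_countable' hε2 B
  choose F F' hFA hF'A hF hF' hμF using fun b : B ↦
    hA.exists_isClosed_subset_inter_and_sdiff hμA
      (hf (isOpen_of_mem_countableBasis b.2).measurableSet) (hw b).ne'
  obtain ⟨K₀, hK₀A, hK₀, hμK₀⟩ := hA.exists_isClosed_sdiff_lt hμA hε2
  refine ⟨K₀ ∩ ⋂ b, (F b ∪ F' b), inter_subset_left.trans hK₀A,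
    hK₀.inter (isClosed_iInter fun b ↦ (hF b).union (hF' b)), ?_, ?_⟩
  · calc μ (A \ (K₀ ∩ ⋂ b, (F b ∪ F' b))) = μ (A \ K₀ ∪ ⋃ b, A \ (F b ∪ F' b)) := by
          rw [sdiff_inter, sdiff_iInter]
      _ ≤ μ (A \ K₀) + ∑' b, μ (A \ (F b ∪ F' b)) :=
          (measure_union_le _ _).trans (by gcongr; exact measure_iUnion_le _)
      _ < ε / 2 + ε / 2 := ENNReal.add_lt_add hμK₀
          ((ENNReal.tsum_le_tsum fun b ↦ (hμF b).le).trans_lt hwε)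
      _ = ε := ENNReal.add_halves ε
  · refine (isBasis_countableBasis β).continuousOn_iff.2 fun b hb ↦
      ⟨(F' ⟨b, hb⟩)ᶜ, (hF' _).isOpen_compl, ?_⟩
    ext x
    simp only [mem_inter_iff, mem_preimage, mem_compl_iff, mem_iInter, mem_union]
    refine and_congr_left fun hx ↦ ⟨fun hxb hxF' ↦ (hF'A _ hxF').2 hxb, fun hxF' ↦ ?_⟩
    exact ((hx.2 ⟨b, hb⟩).resolve_right hxF' |> hFA _).2

end Lusin

namespace MeasureTheory.ProbabilityMeasure

variable {Ω : Type*} [TopologicalSpace Ω] [SecondCountableTopology Ω] [MeasurableSpace Ω]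
  [OpensMeasurableSpace Ω]

theorem tendsto_of_forall_tendsto_finiteUnionsOfCountableBasis {ι : Type*}
    {μ : ProbabilityMeasure Ω} {μs : ι → ProbabilityMeasure Ω} {L : Filter ι}
    [L.IsCountablyGenerated]
    (h : ∀ V ∈ finiteUnionsOfCountableBasis Ω,
      Tendsto (fun i ↦ (μs i : Measure Ω) V) L (𝓝 ((μ : Measure Ω) V))) :
    Tendsto μs L (𝓝 μ) := by
  rcases L.eq_or_neBot with rfl | _
  · exact tendsto_bot
  refine tendsto_of_forall_isOpen_le_liminf' fun G hG ↦ ?_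
  rw [hG.measure_eq_iSup_finiteUnionsOfCountableBasis]
  refine iSup₂_le fun V hV ↦ iSup_le fun hVG ↦ ?_
  calc (μ : Measure Ω) V = L.liminf fun i ↦ (μs i : Measure Ω) V := (h V hV).liminf_eq.symm
    _ ≤ L.liminf fun i ↦ (μs i : Measure Ω) G :=
      liminf_le_liminf (.of_forall fun i ↦ measure_mono hVG)

theorem continuousOn_of_forall_continuousOn_finiteUnionsOfCountableBasis {Y : Type*}
    [TopologicalSpace Y] [FirstCountableTopology Y] {f : Y → ProbabilityMeasure Ω} {K : Set Y}
    (h : ∀ V ∈ finiteUnionsOfCountableBasis Ω, ContinuousOn (fun y ↦ (f y : Measure Ω) V) K) :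
    ContinuousOn f K :=
  fun y hy ↦ tendsto_of_forall_tendsto_finiteUnionsOfCountableBasis fun V hV ↦ h V hV y hy

end MeasureTheory.ProbabilityMeasure

theorem disintegration_map_lusin_general
    {X Y : Type*}
    [MetricSpace X]
    [TopologicalSpace.SeparableSpace X] [MeasurableSpace X] [BorelSpace X]
    [MetricSpace Y] [MeasurableSpace Y] [BorelSpace Y]
    (π : X → Y)
    (μ : Measure X) [IsFiniteMeasure μ]
    (μy : Y → ProbabilityMeasure X)
    (hmeas : Measurable fun y => (μy y : Measure X)) :
    ∀ A : Set Y, MeasurableSet A → (μ.map π) A < ⊤ →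
      ∀ ε : ℝ≥0∞, 0 < ε →
        ∃ K : Set Y, K ⊆ A ∧ IsClosed K ∧ (μ.map π) (A \ K) < ε ∧
          ContinuousOn μy K := by
  intro A hA hμA ε hε
  have := (countable_finiteUnionsOfCountableBasis (Ω := X)).to_subtype
  have hF : Measurable fun y (V : finiteUnionsOfCountableBasis X) ↦ (μy y : Measure X) V :=
    measurable_pi_lambda _ fun V ↦ (Measure.measurable_coe
      (isOpen_of_mem_finiteUnionsOfCountableBasis V.2).measurableSet).comp hmeas
  obtain ⟨K, hKA, hK, hμK, hFK⟩ := hF.exists_isClosed_continuousOn hA hμA.ne hε.ne'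
  refine ⟨K, hKA, hK, hμK,
    ProbabilityMeasure.continuousOn_of_forall_continuousOn_finiteUnionsOfCountableBasis
      fun V hV ↦ ?_⟩
  exact (continuous_apply (⟨V, hV⟩ : finiteUnionsOfCountableBasis X)).comp_continuousOn hFK

/-- **Lusin property for disintegration maps.** If `(μ_y)` is a disintegration of a
finite Borel measure `μ` over a Borel map `π : X → Y` between locally compact complete
separable metric spaces, `ν = π_*μ`, then for every Borel set `A ⊆ Y` of finite
`ν`-measure and every `ε > 0` there is a closed `K ⊆ A` with `ν(A \ K) < ε` on which the
disintegration map `y ↦ μ_y` is continuous into `𝒫(X)` with the weak topology. -/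
theorem disintegration_map_lusin
    {X Y : Type*}
    [MetricSpace X] [LocallyCompactSpace X] [CompleteSpace X]
    [TopologicalSpace.SeparableSpace X] [MeasurableSpace X] [BorelSpace X]
    [MetricSpace Y] [LocallyCompactSpace Y] [CompleteSpace Y]
    [TopologicalSpace.SeparableSpace Y] [MeasurableSpace Y] [BorelSpace Y]
    (π : X → Y) (hπ : Measurable π)
    (μ : Measure X) [IsFiniteMeasure μ]
    (μy : Y → ProbabilityMeasure X)
    (hmeas : Measurable fun y => (μy y : Measure X))
    (hconc : ∀ᵐ y ∂(μ.map π), (μy y : Measure X) ((π ⁻¹' {y})ᶜ) = 0)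
    (hdis : ∀ A : Set X, MeasurableSet A → μ A = ∫⁻ y, (μy y : Measure X) A ∂(μ.map π)) :
    ∀ A : Set Y, MeasurableSet A → (μ.map π) A < ⊤ →
      ∀ ε : ℝ≥0∞, 0 < ε →
        ∃ K : Set Y, K ⊆ A ∧ IsClosed K ∧ (μ.map π) (A \ K) < ε ∧
          ContinuousOn μy K :=
  disintegration_map_lusin_general π μ μy hmeas
end

section
/- Let X be a locally compact separable metric space with metric d_X, let μ be a finite Borel measure on X, let (Y, d_Y) be a metric space, let p : X → Y be a Borel map with ν = p_*μ, and let (μ_y)_{y∈Y} be a disintegration of μ over p. Assume that for all y, y' ∈ Y the squared 2-Wasserstein distance between the conditional measures equals the squared distance in Y, i.e. inf_γ ∫_{X×X} d_X(x₁, x₂)² dγ(x₁, x₂) = d_Y(y, y')², where the infimum is over all couplings γ of (μ_y, μ_{y'}). Then the disintegration map y ↦ μ_y is continuous from Y into ProbabilityMeasure(X) with the topology of weak convergence. -/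
/-!
A coupling `γ` of `μ` and `ν` with `∫ d² dγ < ε³` moves, by Markov's inequality, all but
`γ`-mass `ε` a distance less than `ε`, so the Lévy–Prokhorov distance of `μ` and `ν` is at most
`ε`. Hence `W₂(μ_y, μ_{y'}) = d_Y(y, y')` makes `y ↦ μ_y` Hölder continuous with exponent `2/3`
for the Lévy–Prokhorov metric, whose topology is finer than that of weak convergence.
-/

open MeasureTheory Metric
open scoped ENNReal

section Coupling

variable {X : Type*} [PseudoMetricSpace X] [MeasurableSpace X]

noncomputable def wassersteinSq (μ ν : Measure X) : ℝ≥0∞ :=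
  sInf {r : ℝ≥0∞ | ∃ γ : Measure (X × X), IsProbabilityMeasure γ ∧
    γ.map Prod.fst = μ ∧ γ.map Prod.snd = ν ∧
    r = ∫⁻ q, ENNReal.ofReal (dist q.1 q.2 ^ 2) ∂γ}

variable [OpensMeasurableSpace X]

theorem measure_le_measure_thickening_add_of_coupling {μ ν : Measure X} {γ : Measure (X × X)}
    (h₁ : γ.map Prod.fst = μ) (h₂ : γ.map Prod.snd = ν) {B : Set X} (hB : MeasurableSet B)
    (ε : ℝ) : μ B ≤ ν (thickening ε B) + γ {q | ε ≤ dist q.1 q.2} := by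
  have hcover : Prod.fst ⁻¹' B ⊆ Prod.snd ⁻¹' thickening ε B ∪ {q : X × X | ε ≤ dist q.1 q.2} :=
    fun q hq => (lt_or_ge (dist q.1 q.2) ε).imp
      (fun hlt => mem_thickening_iff.2 ⟨q.1, hq, by rwa [dist_comm]⟩) id
  calc μ B = γ (Prod.fst ⁻¹' B) := by rw [← h₁, Measure.map_apply measurable_fst hB]
    _ ≤ γ (Prod.snd ⁻¹' thickening ε B) + γ {q | ε ≤ dist q.1 q.2} :=
      (measure_mono hcover).trans (measure_union_le _ _)
    _ = ν (thickening ε B) + γ {q | ε ≤ dist q.1 q.2} := by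
      rw [← h₂, Measure.map_apply measurable_snd isOpen_thickening.measurableSet]

variable [SecondCountableTopology X]

theorem measure_dist_ge_le_lintegral_dist_sq_div (γ : Measure (X × X)) {ε : ℝ≥0∞}
    (hε₀ : ε ≠ 0) (hε : ε ≠ ∞) :
    γ {q | ε.toReal ≤ dist q.1 q.2} ≤ (∫⁻ q, ENNReal.ofReal (dist q.1 q.2 ^ 2) ∂γ) / ε ^ 2 := by
  have hsub : {q : X × X | ε.toReal ≤ dist q.1 q.2} ⊆
      {q | ε ^ 2 ≤ ENNReal.ofReal (dist q.1 q.2 ^ 2)} := fun q (hq : ε.toReal ≤ _) => by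
    rw [Set.mem_ofPred, ENNReal.ofReal_pow dist_nonneg]
    exact pow_le_pow_left' ((ENNReal.le_ofReal_iff_toReal_le hε dist_nonneg).2 hq) 2
  exact (measure_mono hsub).trans <| meas_ge_le_lintegral_div
    (measurable_dist.pow_const 2).ennreal_ofReal.aemeasurable
    (pow_ne_zero 2 hε₀) (ENNReal.pow_ne_top hε)

theorem levyProkhorovEDist_le_of_wassersteinSq_le {μ ν : Measure X} [IsProbabilityMeasure μ]
    [IsProbabilityMeasure ν] {δ : ℝ≥0∞} (h : wassersteinSq μ ν ≤ δ ^ 3) :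
    levyProkhorovEDist μ ν ≤ δ := by
  refine levyProkhorovEDist_le_of_forall_le μ ν δ fun ε B hδε hε hB => ?_
  have hε₀ : ε ≠ 0 := (pos_of_gt hδε).ne'
  obtain ⟨_, ⟨γ, -, h₁, h₂, rfl⟩, hγ⟩ :=
    sInf_lt_iff.1 (h.trans_lt (ENNReal.pow_lt_pow_left (by norm_num) hδε))
  have hfar : γ {q | ε.toReal ≤ dist q.1 q.2} ≤ ε :=
    calc γ {q | ε.toReal ≤ dist q.1 q.2}
        ≤ (∫⁻ q, ENNReal.ofReal (dist q.1 q.2 ^ 2) ∂γ) / ε ^ 2 :=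
          measure_dist_ge_le_lintegral_dist_sq_div γ hε₀ hε.ne
      _ ≤ ε * ε ^ 2 / ε ^ 2 := by rw [← pow_succ']; gcongr
      _ = ε := ENNReal.mul_div_cancel_right (pow_ne_zero 2 hε₀) (ENNReal.pow_ne_top hε.ne)
  exact (measure_le_measure_thickening_add_of_coupling h₁ h₂ hB _).trans (by gcongr)

theorem holderWith_ofMeasure_of_wassersteinSq_le {Y : Type*} [PseudoEMetricSpace Y]
    (f : Y → ProbabilityMeasure X)
    (h : ∀ y y', wassersteinSq (f y : Measure X) (f y') ≤ edist y y' ^ 2) :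
    HolderWith 1 (2 / 3) fun y => LevyProkhorov.ofMeasure (f y) := by
  intro y y'
  rw [ENNReal.coe_one, one_mul, LevyProkhorov.edist_probabilityMeasure_def]
  refine levyProkhorovEDist_le_of_wassersteinSq_le ((h y y').trans_eq ?_)
  rw [← ENNReal.rpow_mul_natCast]
  norm_num

end Coupling

theorem disintegration_map_continuous_of_wasserstein_eq_dist_general
    {X Y : Type*}
    [MetricSpace X] [TopologicalSpace.SeparableSpace X]
    [MeasurableSpace X] [BorelSpace X]
    [MetricSpace Y]
    (μy : Y → ProbabilityMeasure X)
    (hW : ∀ y y' : Y,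
      sInf {r : ℝ≥0∞ | ∃ γ : Measure (X × X), IsProbabilityMeasure γ ∧
          γ.map Prod.fst = (μy y : Measure X) ∧
          γ.map Prod.snd = (μy y' : Measure X) ∧
          r = ∫⁻ q, ENNReal.ofReal (dist q.1 q.2 ^ 2) ∂γ}
        = ENNReal.ofReal (dist y y' ^ 2)) :
    Continuous μy := by
  have hHolder := holderWith_ofMeasure_of_wassersteinSq_le μy fun y y' =>
    ((hW y y').trans (by rw [edist_dist, ENNReal.ofReal_pow dist_nonneg])).le
  exact LevyProkhorov.continuous_toMeasure_probabilityMeasure.comp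
    (hHolder.continuous (by norm_num))

/-- If `(μ_y)` is a disintegration of a finite Borel measure `μ` on `X` over a Borel
map `p : X → Y` and the 2-Wasserstein distance between conditional measures equals the
distance in the base (`W₂(μ_y, μ_{y'}) = d_Y(y, y')`, e.g. for metric measure
foliations), then the disintegration map `y ↦ μ_y` is weakly continuous. -/
theorem disintegration_map_continuous_of_wasserstein_eq_dist
    {X Y : Type*}
    [MetricSpace X] [LocallyCompactSpace X] [TopologicalSpace.SeparableSpace X]
    [MeasurableSpace X] [BorelSpace X]
    [MetricSpace Y] [MeasurableSpace Y] [BorelSpace Y]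
    (p : X → Y) (hp : Measurable p)
    (μ : Measure X) [IsFiniteMeasure μ]
    (μy : Y → ProbabilityMeasure X)
    (hmeas : Measurable fun y => (μy y : Measure X))
    (hconc : ∀ᵐ y ∂(μ.map p), (μy y : Measure X) ((p ⁻¹' {y})ᶜ) = 0)
    (hdis : ∀ A : Set X, MeasurableSet A → μ A = ∫⁻ y, (μy y : Measure X) A ∂(μ.map p))
    (hW : ∀ y y' : Y,
      sInf {r : ℝ≥0∞ | ∃ γ : Measure (X × X), IsProbabilityMeasure γ ∧
          γ.map Prod.fst = (μy y : Measure X) ∧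
          γ.map Prod.snd = (μy y' : Measure X) ∧
          r = ∫⁻ q, ENNReal.ofReal (dist q.1 q.2 ^ 2) ∂γ}
        = ENNReal.ofReal (dist y y' ^ 2)) :
    Continuous μy :=
  disintegration_map_continuous_of_wasserstein_eq_dist_general μy hW
end
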